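/- Let R, X be real symmetric with R positive definite, let v_1,…,v_n be R-orthonormal generalized eigenvectors with eigenvalues λ_k, and let V ∈ ℝⁿ. Then the solution I of (R + iX) I = V satisfies Re(Iᴴ V) = Σ_k |v_kᵀ V|² / (1 + λ_k²) ≥ 0. -/

import Mathlib

/-!
Write `M = R + iX` and `c_k = v_kᵀ V`. Since `R`, `X` are symmetric and `X v_k = λ_k R v_k`,
pairing `M I = V` with `v_k` gives `c_k = (1 + iλ_k) a_k` for `a_k = (R v_k)ᵀ I`. The
`R`-orthonormal family is complete, `V = ∑ c_k R v_k`, hence `Iᴴ V = ∑ c_k conj(a_k)`, and the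
`k`-th term has real part `|a_k|² = c_k² / (1 + λ_k²)`.
-/

open Matrix Complex

open scoped ComplexConjugate

namespace Matrix

variable {K n : Type*} [CommRing K] [Fintype n]

theorem sum_dotProduct_smul_mulVec_of_orthonormal [DecidableEq n] {R : Matrix n n K}
    {v : n → n → K} (hortho : ∀ j k, v j ⬝ᵥ (R *ᵥ v k) = if j = k then 1 else 0) (w : n → K) :
    ∑ k, (v k ⬝ᵥ w) • R *ᵥ v k = w := by
  have hPRP : of v * (R * (of v)ᵀ) = 1 := by
    ext j k
    simpa only [mul_apply, of_apply, transpose_apply, mulVec, dotProduct, Finset.mul_sum,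
      one_apply] using hortho j k
  calc ∑ k, (v k ⬝ᵥ w) • R *ᵥ v k = ((R * (of v)ᵀ) * of v) *ᵥ w := by
        rw [← mulVec_mulVec, ← mulVec_mulVec, mulVec_transpose, vecMul_eq_sum, mulVec_sum]
        simp only [mulVec_smul]
        rfl
    _ = w := by rw [mul_eq_one_comm.mp hPRP, one_mulVec]

theorem dotProduct_add_smul_mulVec_of_mulVec_eq_smul {R X : Matrix n n K} (hR : R.IsSymm)
    (hX : X.IsSymm) {u : n → K} {l : K} (heig : X *ᵥ u = l • R *ᵥ u) (μ : K) (z : n → K) :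
    u ⬝ᵥ ((R + μ • X) *ᵥ z) = (1 + μ * l) * ((R *ᵥ u) ⬝ᵥ z) := by
  have hM : (R + μ • X).IsSymm := hR.add (hX.smul μ)
  rw [dotProduct_mulVec, ← mulVec_transpose, hM.eq, add_mulVec, smul_mulVec, heig, smul_smul,
    add_dotProduct, smul_dotProduct, smul_eq_mul]
  ring

end Matrix

namespace Complex

variable {m n : Type*} [Fintype n]

theorem map_ofReal_mulVec (A : Matrix m n ℝ) (u : n → ℝ) :
    A.map ofReal *ᵥ (fun i => (u i : ℂ)) = fun i => ((A *ᵥ u) i : ℂ) :=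
  funext fun i => (RingHom.map_mulVec ofRealHom A u i).symm

theorem ofReal_dotProduct_ofReal (u w : n → ℝ) :
    (fun i => (u i : ℂ)) ⬝ᵥ (fun i => (w i : ℂ)) = ((u ⬝ᵥ w : ℝ) : ℂ) :=
  (RingHom.map_dotProduct ofRealHom u w).symm

theorem star_dotProduct_ofReal (z : n → ℂ) (u : n → ℝ) :
    star z ⬝ᵥ (fun i => (u i : ℂ)) = conj ((fun i => (u i : ℂ)) ⬝ᵥ z) := by
  simp only [dotProduct, Pi.star_apply, map_sum, map_mul, conj_ofReal, star_def, mul_comm]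

theorem re_ofReal_mul_conj_of_ofReal_eq {a : ℂ} {c l : ℝ} (h : (c : ℂ) = (1 + I * l) * a) :
    ((c : ℂ) * conj a).re = c ^ 2 / (1 + l ^ 2) := by
  have hnorm : c ^ 2 = (1 + l ^ 2) * normSq a := by
    have := congrArg normSq h
    rw [normSq_ofReal, normSq_mul, mul_comm I, ← ofReal_one, normSq_add_mul_I 1 l] at this
    linear_combination this
  rw [eq_div_iff (by positivity), hnorm, h, mul_assoc, mul_conj]
  simp [mul_comm]

end Complex

theorem stmt_19_general (n : ℕ) (R X : Matrix (Fin n) (Fin n) ℝ)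
    (hR : R.IsSymm) (hX : X.IsSymm)
    (v : Fin n → (Fin n → ℝ)) (lam : Fin n → ℝ)
    (heig : ∀ k, X *ᵥ v k = lam k • (R *ᵥ v k))
    (hortho : ∀ j k, v j ⬝ᵥ (R *ᵥ v k) = if j = k then 1 else 0)
    (V : Fin n → ℝ) (I : Fin n → ℂ)
    (hsol : (R.map Complex.ofReal + Complex.I • X.map Complex.ofReal) *ᵥ I
        = fun i => ((V i : ℂ))) :
    ((star I) ⬝ᵥ (fun i => ((V i : ℂ)))).re
        = ∑ k, (v k ⬝ᵥ V) ^ 2 / (1 + (lam k) ^ 2) ∧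
    0 ≤ ((star I) ⬝ᵥ (fun i => ((V i : ℂ)))).re := by
  have hcoeff (k : Fin n) : ((v k ⬝ᵥ V : ℝ) : ℂ) =
      (1 + Complex.I * lam k) * ((fun i => ((R *ᵥ v k) i : ℂ)) ⬝ᵥ I) := by
    have heigC : X.map ofReal *ᵥ (fun i => (v k i : ℂ)) =
        (lam k : ℂ) • (R.map ofReal *ᵥ (fun i => (v k i : ℂ))) := by
      rw [map_ofReal_mulVec, map_ofReal_mulVec, heig k]
      ext i
      simp
    rw [← map_ofReal_mulVec,
      ← dotProduct_add_smul_mulVec_of_mulVec_eq_smul (hR.map _) (hX.map _) heigC, hsol,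
      ofReal_dotProduct_ofReal]
  have hexpand : star I ⬝ᵥ (fun i => (V i : ℂ)) =
      ∑ k, ((v k ⬝ᵥ V : ℝ) : ℂ) * conj ((fun i => ((R *ᵥ v k) i : ℂ)) ⬝ᵥ I) := by
    have horthoC (j k : Fin n) : (fun i => (v j i : ℂ)) ⬝ᵥ
        (R.map ofReal *ᵥ (fun i => (v k i : ℂ))) = if j = k then 1 else 0 := by
      rw [map_ofReal_mulVec, ofReal_dotProduct_ofReal, hortho]
      split_ifs <;> simp
    conv_lhs => rw [← sum_dotProduct_smul_mulVec_of_orthonormal horthoC (fun i => (V i : ℂ))]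
    simp only [dotProduct_sum, dotProduct_smul, map_ofReal_mulVec, ofReal_dotProduct_ofReal,
      star_dotProduct_ofReal, smul_eq_mul]
  have hre : (star I ⬝ᵥ (fun i => (V i : ℂ))).re = ∑ k, (v k ⬝ᵥ V) ^ 2 / (1 + lam k ^ 2) := by
    rw [hexpand, re_sum]
    exact Finset.sum_congr rfl fun k _ => re_ofReal_mul_conj_of_ofReal_eq (hcoeff k)
  exact ⟨hre, hre ▸ Finset.sum_nonneg fun k _ => by positivity⟩

theorem stmt_19 (n : ℕ) (R X : Matrix (Fin n) (Fin n) ℝ)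
    (hR : R.IsSymm) (hX : X.IsSymm) (hRpd : R.PosDef)
    (v : Fin n → (Fin n → ℝ)) (lam : Fin n → ℝ)
    (heig : ∀ k, X *ᵥ v k = lam k • (R *ᵥ v k))
    (hortho : ∀ j k, v j ⬝ᵥ (R *ᵥ v k) = if j = k then 1 else 0)
    (V : Fin n → ℝ) (I : Fin n → ℂ)
    (hsol : (R.map Complex.ofReal + Complex.I • X.map Complex.ofReal) *ᵥ I
        = fun i => ((V i : ℂ))) :
    ((star I) ⬝ᵥ (fun i => ((V i : ℂ)))).re
        = ∑ k, (v k ⬝ᵥ V) ^ 2 / (1 + (lam k) ^ 2) ∧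
    0 ≤ ((star I) ⬝ᵥ (fun i => ((V i : ℂ)))).re :=
  stmt_19_general n R X hR hX v lam heig hortho V I hsol
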